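/- arXiv:1712.08454 — 2 statements merged into one kernel-verified Lean document; each statement's English description precedes it below -/
import Mathlib

section
/- Let q(x₁,x₂) = c + (λ₁/2)x₁² + (λ₂/2)x₂² with λ₁ > 0, λ₂ ≤ 0, λ₁ + λ₂ = H > 0, and let Ω ⊂ ℝ² be a bounded smooth convex domain containing the origin. Then the set {x ∈ ∂Ω : ∂q/∂n(x) > 0} and the set {x ∈ ∂Ω : ∂q/∂n(x) < 0} each have at most two connected components, where n is the outer unit normal of ∂Ω. -/
/-- tail contradiction shared by pair lemmas, case u1 < 0 -/
private lemma pair_tail (a1 a2 u1 u2 k1 k2 : ℝ)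
    (hC2 : 0 ≤ k1*u1+k2*u2) (hC4 : 0 < k1*(a1+u1)+k2*(a2+u2))
    (hC5 : 0 < a1*u2-a2*u1) (hC7 : 0 < a1+u1)
    (hk1 : 0 < k1) (hu1 : u1 < 0) (hu2 : u2 < 0) (hk2 : k2 < 0)
    (hb2 : 0 < a2+u2) : False := by
  have hX : 0 < (-k2)*(a2+u2) := mul_pos (by linarith) hb2
  have hY : 0 < k1*(-u1) := mul_pos hk1 (by linarith)
  have hCpos : 0 < (a2+u2)*(-u1) := mul_pos hb2 (by linarith)
  have hBpos : 0 < (-k2)*(-u2) := mul_pos (by linarith) (by linarith)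
  have hA : (-k2)*(a2+u2) < k1*(a1+u1) := by linarith
  have hB : k1*(-u1) ≤ (-k2)*(-u2) := by linarith
  have hC : (a1+u1)*(-u2) < (a2+u2)*(-u1) := by nlinarith [hC5]
  have t1 : 0 < (k1*(a1+u1) - (-k2)*(a2+u2)) * (((-k2)*(-u2)) * ((a2+u2)*(-u1))) :=
    mul_pos (by linarith) (mul_pos hBpos hCpos)
  have t2 : 0 ≤ ((-k2)*(a2+u2)) * (((-k2)*(-u2) - k1*(-u1)) * ((a2+u2)*(-u1))) :=
    mul_nonneg hX.le (mul_nonneg (by linarith) hCpos.le)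
  have t3 : 0 < ((-k2)*(a2+u2)) * ((k1*(-u1)) * ((a2+u2)*(-u1) - (a1+u1)*(-u2))) :=
    mul_pos hX (mul_pos hY (by linarith))
  nlinarith [t1, t2, t3]

private lemma pair_ii (a1 a2 u1 u2 n1 n2 k1 k2 : ℝ)
    (hC1 : n1*u1+n2*u2 ≤ 0) (hC2 : 0 ≤ k1*u1+k2*u2)
    (hC3 : 0 < n1*a1+n2*a2) (hC4 : 0 < k1*(a1+u1)+k2*(a2+u2))
    (hC5 : 0 < a1*u2-a2*u1) (hC6 : 0 < a1) (hC7 : 0 < a1+u1)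
    (hn1 : n1 ≤ 0) (hn2 : 0 < n2) : k1 ≤ 0 := by
  by_contra hk1
  push_neg at hk1
  have ha2 : 0 < a2 := by nlinarith [mul_nonneg (neg_nonneg.2 hn1) hC6.le]
  rcases lt_trichotomy u1 0 with hu1 | hu1 | hu1
  · have hu2 : u2 ≤ 0 := by nlinarith [mul_nonneg (neg_nonneg.2 hn1) (neg_nonneg.2 hu1.le)]
    have hk2u2 : 0 < k2*u2 := by nlinarith [mul_pos hk1 (neg_pos.2 hu1)]
    have hu2' : u2 < 0 := lt_of_le_of_ne hu2 (by intro h; rw [h] at hk2u2; simp at hk2u2)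
    have hk2 : k2 < 0 := by nlinarith
    have hb2 : 0 < a2+u2 := by nlinarith [mul_pos hC7 (neg_pos.2 hu2')]
    exact pair_tail a1 a2 u1 u2 k1 k2 hC2 hC4 hC5 hC7 hk1 hu1 hu2' hk2 hb2
  · subst hu1
    have hu2 : u2 ≤ 0 := by nlinarith
    nlinarith [mul_nonneg hC6.le (neg_nonneg.2 hu2)]
  · have hu2 : 0 < u2 := by nlinarith [mul_pos ha2 hu1]
    have t1 : 0 < u1*(n1*a1+n2*a2) := mul_pos hu1 hC3
    have t2 : 0 ≤ a1*(-(n1*u1+n2*u2)) := mul_nonneg hC6.le (by linarith)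
    have t3 : 0 < n2*(a1*u2-a2*u1) := mul_pos hn2 hC5
    nlinarith [t1, t2, t3]

private lemma pair_iii (a1 a2 u1 u2 n1 n2 k1 k2 : ℝ)
    (hC1 : n1*u1+n2*u2 ≤ 0) (hC2 : 0 ≤ k1*u1+k2*u2)
    (hC3 : 0 < n1*a1+n2*a2) (hC4 : 0 < k1*(a1+u1)+k2*(a2+u2))
    (hC5 : 0 < a1*u2-a2*u1) (hC6 : 0 < a1) (hC7 : 0 < a1+u1)
    (hk1 : k1 ≤ 0) (hk2 : k2 < 0) : n1 ≤ 0 := by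
  have := pair_ii (a1+u1) (-(a2+u2)) (-u1) u2 k1 (-k2) n1 (-n2)
    (by nlinarith) (by nlinarith) (by nlinarith) (by nlinarith) (by nlinarith)
    hC7 (by linarith) hk1 (by linarith)
  exact this

private lemma pair_i (a1 a2 u1 u2 n1 n2 k1 k2 : ℝ)
    (hC1 : n1*u1+n2*u2 ≤ 0) (hC2 : 0 ≤ k1*u1+k2*u2)
    (hC3 : 0 < n1*a1+n2*a2) (hC4 : 0 < k1*(a1+u1)+k2*(a2+u2))
    (hC5 : 0 < a1*u2-a2*u1) (hC6 : 0 < a1) (hC7 : 0 < a1+u1)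
    (hn : 0 < n1) (hk : 0 < k1) : 0 ≤ n1*k2-n2*k1 := by
  by_contra hcr
  push_neg at hcr
  have h0 : 0 ≤ u2 * (n1*k2 - n2*k1) := by nlinarith [mul_nonneg hk.le (neg_nonneg.2 hC1), mul_nonneg hn.le hC2]
  have hu2 : u2 ≤ 0 := by
    by_contra h
    push_neg at h
    nlinarith [mul_pos h (neg_pos.2 hcr)]
  rcases lt_trichotomy u1 0 with hu1 | hu1 | hu1
  · have hk2u2 : 0 < k2*u2 := by nlinarith [mul_pos hk (neg_pos.2 hu1)]
    have hu2' : u2 < 0 := lt_of_le_of_ne hu2 (by intro h; rw [h] at hk2u2; simp at hk2u2)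
    have hk2 : k2 < 0 := by nlinarith
    have hb2 : 0 < a2+u2 := by nlinarith [mul_pos hC7 (neg_pos.2 hu2')]
    exact pair_tail a1 a2 u1 u2 k1 k2 hC2 hC4 hC5 hC7 hk hu1 hu2' hk2 hb2
  · subst hu1
    nlinarith [mul_nonneg hC6.le (neg_nonneg.2 hu2)]
  · have ha2 : a2 < 0 := by nlinarith [mul_nonneg hC6.le (neg_nonneg.2 hu2)]
    have hn2u2 : n2*u2 < 0 := by nlinarith [mul_pos hn hu1]
    have hu2' : u2 < 0 := lt_of_le_of_ne hu2 (by intro h; rw [h] at hn2u2; simp at hn2u2)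
    have hn2 : 0 < n2 := by
      by_contra h
      push_neg at h
      nlinarith [mul_nonneg (neg_nonneg.2 h) (neg_nonneg.2 hu2)]
    have t1 : 0 ≤ (-a2) * (-(n1*u1+n2*u2)) := mul_nonneg (by linarith) (by linarith)
    have t2 : 0 < (-u2)*(n1*a1+n2*a2) := mul_pos (by linarith) hC3
    have t3 : 0 < n1*(a1*u2-a2*u1) := mul_pos hn hC5
    nlinarith [t1, t2, t3]

private lemma quasi (m1 m2 fa fm fb ga gm gb : ℝ) (hm1 : 0 ≤ m1) (hm2 : m2 ≤ 0)
    (hf1 : fa < fm) (hf2 : fm < fb) (hg1 : ga ≤ gm) (hg2 : gm ≤ gb)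
    (ha : 0 < m1 + m2*(fa*ga)) (hb : 0 < m1 + m2*(fb*gb)) :
    0 < m1 + m2*(fm*gm) := by
  rcases hm2.lt_or_eq with hm2' | rfl
  swap
  · simpa using ha
  rcases le_or_gt 0 fm with hfm | hfm
  · rcases le_or_gt gm 0 with hgm | hgm
    · rcases hm1.lt_or_eq with hm1' | hm1'
      · nlinarith [mul_nonneg (neg_nonneg.2 hm2'.le) (mul_nonneg hfm (neg_nonneg.2 hgm))]
      · -- m1 = 0
        subst hm1'
        have hfaga : fa*ga < 0 := by
          by_contra h; push_neg at h
          nlinarith [mul_nonneg (neg_nonneg.2 hm2'.le) h]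
        have hga : ga < 0 := lt_of_le_of_ne (hg1.trans hgm) (by
          intro h; rw [h, mul_zero] at hfaga; exact absurd hfaga (by norm_num))
        have hfa : 0 < fa := by
          by_contra h; push_neg at h
          nlinarith [mul_nonneg (neg_nonneg.2 h) (neg_nonneg.2 hga.le)]
        have hfm' : 0 < fm := lt_trans hfa hf1
        have hfb : 0 < fb := lt_trans hfm' hf2
        have hfbgb : fb*gb < 0 := by
          by_contra h; push_neg at h
          nlinarith [mul_nonneg (neg_nonneg.2 hm2'.le) h]
        have hgb : gb < 0 := by
          by_contra h; push_neg at h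
          nlinarith [mul_nonneg hfb.le h]
        have hgm' : gm < 0 := lt_of_le_of_lt hg2 hgb
        nlinarith [mul_pos (neg_pos.2 hm2') (mul_pos hfm' (neg_pos.2 hgm'))]
    · have hgb : 0 < gb := lt_of_lt_of_le hgm hg2
      have h1 : fm*gm ≤ fm*gb := mul_le_mul_of_nonneg_left hg2 hfm
      have h2 : fm*gb < fb*gb := mul_lt_mul_of_pos_right hf2 hgb
      nlinarith [mul_pos (neg_pos.2 hm2') (sub_pos.2 (lt_of_le_of_lt h1 h2))]
  · rcases le_or_gt 0 gm with hgm | hgm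
    · rcases hm1.lt_or_eq with hm1' | hm1'
      · nlinarith [mul_nonneg (neg_nonneg.2 hm2'.le) (mul_nonneg (neg_nonneg.2 hfm.le) hgm)]
      · subst hm1'
        have hfaga : fa*ga < 0 := by
          by_contra h; push_neg at h
          nlinarith [mul_nonneg (neg_nonneg.2 hm2'.le) h]
        have hfa : fa < 0 := lt_trans hf1 hfm
        have hga : 0 < ga := by
          by_contra h; push_neg at h
          nlinarith [mul_nonneg (neg_nonneg.2 hfa.le) (neg_nonneg.2 h)]
        have hgm' : 0 < gm := lt_of_lt_of_le hga hg1
        nlinarith [mul_pos (neg_pos.2 hm2') (mul_pos (neg_pos.2 hfm) hgm')]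
    · have hga : ga < 0 := lt_of_le_of_lt hg1 hgm
      have hfa : fa < 0 := lt_trans hf1 hfm
      have h1 : fm*gm < fa*gm := by nlinarith
      have h2 : fa*gm ≤ fa*ga := by nlinarith
      nlinarith [mul_pos (neg_pos.2 hm2') (sub_pos.2 (lt_of_lt_of_le h1 h2))]

open RealInnerProductSpace

private lemma half {E : Type*} [NormedAddCommGroup E] [InnerProductSpace ℝ E]
    (Ω : Set E) (hΩo : IsOpen Ω) (hΩb : Bornology.IsBounded Ω) (hΩconv : Convex ℝ Ω)
    (h0 : (0:E) ∈ Ω)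
    (ν : E → E)
    (hsupp : ∀ x ∈ frontier Ω, ∀ z ∈ closure Ω, ⟪ν x, z - x⟫ ≤ 0)
    (hν0 : ∀ x ∈ frontier Ω, 0 < ⟪ν x, x⟫)
    (u w : E) (hexp : ∀ a : E, a = ⟪a,u⟫ • u + ⟪a,w⟫ • w)
    (huu : ⟪u,u⟫ = 1) (hww : ⟪w,w⟫ = 1) (huw : ⟪u,w⟫ = 0)
    (m1 m2 : ℝ) (hm1 : 0 ≤ m1) (hm2 : m2 ≤ 0) :
    IsPreconnected {x : E | x ∈ frontier Ω ∧
      0 < m1 * (⟪x,u⟫ * ⟪ν x,u⟫) + m2 * (⟪x,w⟫ * ⟪ν x,w⟫) ∧ 0 < ⟪x,u⟫} := by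
  have hwu : ⟪w,u⟫ = 0 := by rw [real_inner_comm]; exact huw
  have hnhds : Ω ∈ nhds 0 := hΩo.mem_nhds h0
  have habs : Absorbent ℝ Ω := absorbent_nhds_zero hnhds
  have hvb : Bornology.IsVonNBounded ℝ Ω := NormedSpace.isVonNBounded_of_isBounded ℝ hΩb
  have hgpos : ∀ v : E, v ≠ 0 → 0 < gauge Ω v := fun v hv => (gauge_pos habs hvb).2 hv
  have hgone : ∀ x ∈ frontier Ω, gauge Ω x = 1 :=
    fun x hx => (gauge_eq_one_iff_mem_frontier hΩconv hnhds).2 hx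
  have hPar : ∀ a b : E, ⟪a,b⟫ = ⟪a,u⟫*⟪b,u⟫ + ⟪a,w⟫*⟪b,w⟫ := by
    intro a b
    conv_lhs => rw [hexp b]
    rw [inner_add_right, real_inner_smul_right, real_inner_smul_right]
    ring
  have hdu : ∀ t : ℝ, ⟪u + t • w, u⟫ = 1 := by
    intro t; rw [inner_add_left, real_inner_smul_left, huu, hwu]; ring
  have hdw : ∀ t : ℝ, ⟪u + t • w, w⟫ = t := by
    intro t; rw [inner_add_left, real_inner_smul_left, huw, hww]; ring
  have hd0 : ∀ t : ℝ, u + t • w ≠ 0 := by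
    intro t h
    have := hdu t
    rw [h, inner_zero_left] at this
    norm_num at this
  set Φ : ℝ → E := fun t => (gauge Ω (u + t • w))⁻¹ • (u + t • w) with hΦdef
  have hΦg : ∀ t, gauge Ω (Φ t) = 1 := by
    intro t
    rw [hΦdef]
    simp only
    rw [gauge_smul_of_nonneg (inv_nonneg.2 (gauge_nonneg _)), smul_eq_mul,
      inv_mul_cancel₀ (ne_of_gt (hgpos _ (hd0 t)))]
  have hΦF : ∀ t, Φ t ∈ frontier Ω :=
    fun t => (gauge_eq_one_iff_mem_frontier hΩconv hnhds).1 (hΦg t)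
  have hΦu : ∀ t, ⟪Φ t, u⟫ = (gauge Ω (u + t • w))⁻¹ := by
    intro t; rw [hΦdef]; simp only; rw [real_inner_smul_left, hdu]; ring
  have hΦw : ∀ t, ⟪Φ t, w⟫ = (gauge Ω (u + t • w))⁻¹ * t := by
    intro t; rw [hΦdef]; simp only; rw [real_inner_smul_left, hdw]
  have hΦupos : ∀ t, 0 < ⟪Φ t, u⟫ := by
    intro t; rw [hΦu]; exact inv_pos.2 (hgpos _ (hd0 t))
  have hΦcont : Continuous Φ := by
    have hc1 : Continuous fun t : ℝ => u + t • w :=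
      continuous_const.add (continuous_id.smul continuous_const)
    exact (((continuous_gauge hΩconv hnhds).comp hc1).inv₀
      (fun t => ne_of_gt (hgpos _ (hd0 t)))).smul hc1
  have hrepr : ∀ x ∈ frontier Ω, 0 < ⟪x,u⟫ → Φ (⟪x,w⟫ / ⟪x,u⟫) = x := by
    intro x hx hxu
    have hveq0 : u + (⟪x,w⟫ / ⟪x,u⟫) • w = (⟪x,u⟫)⁻¹ • (⟪x,u⟫ • u + ⟪x,w⟫ • w) := by
      rw [smul_add, smul_smul, smul_smul, inv_mul_cancel₀ (ne_of_gt hxu), one_smul,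
        div_eq_inv_mul]
    have hveq : u + (⟪x,w⟫ / ⟪x,u⟫) • w = (⟪x,u⟫)⁻¹ • x := by
      rw [hveq0]; congr 1; exact (hexp x).symm
    rw [hΦdef]
    simp only
    rw [hveq, gauge_smul_of_nonneg (inv_nonneg.2 hxu.le), smul_eq_mul, hgone x hx, mul_one,
      inv_inv, smul_smul, mul_inv_cancel₀ (ne_of_gt hxu), one_smul]
  -- pair constraint extraction
  have hpair : ∀ p ∈ frontier Ω, ∀ q ∈ frontier Ω,
      ⟪ν p, u⟫*(⟪q,u⟫-⟪p,u⟫) + ⟪ν p, w⟫*(⟪q,w⟫-⟪p,w⟫) ≤ 0 := by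
    intro p hp q hq
    have h2 := hsupp p hp q (frontier_subset_closure.trans (by rfl) hq)
    rw [hPar (ν p) (q - p), inner_sub_left, inner_sub_left] at h2
    linarith
  have hinner : ∀ x ∈ frontier Ω,
      0 < ⟪ν x, u⟫*⟪x,u⟫ + ⟪ν x, w⟫*⟪x,w⟫ := by
    intro x hx
    have := hν0 x hx
    rwa [hPar (ν x) x] at this
  have hsgn : ∀ x ∈ frontier Ω,
      0 < m1 * (⟪x,u⟫ * ⟪ν x,u⟫) + m2 * (⟪x,w⟫ * ⟪ν x,w⟫) →
      0 < ⟪x,u⟫ * ⟪ν x,u⟫ := by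
    intro x hx hg
    by_contra h
    push_neg at h
    have h2 := hinner x hx
    have h3 : 0 < ⟪x,w⟫ * ⟪ν x,w⟫ := by nlinarith
    nlinarith [mul_nonneg hm1 (neg_nonneg.2 h), mul_nonneg (neg_nonneg.2 hm2) h3.le]
  have key : ∀ x ∈ frontier Ω, ∀ m ∈ frontier Ω, ∀ y ∈ frontier Ω,
      0 < ⟪x,u⟫ → 0 < ⟪m,u⟫ → 0 < ⟪y,u⟫ →
      0 < ⟪x,u⟫*⟪m,w⟫ - ⟪x,w⟫*⟪m,u⟫ →
      0 < ⟪m,u⟫*⟪y,w⟫ - ⟪m,w⟫*⟪y,u⟫ →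
      0 < m1 * (⟪x,u⟫ * ⟪ν x,u⟫) + m2 * (⟪x,w⟫ * ⟪ν x,w⟫) →
      0 < m1 * (⟪y,u⟫ * ⟪ν y,u⟫) + m2 * (⟪y,w⟫ * ⟪ν y,w⟫) →
      0 < m1 * (⟪m,u⟫ * ⟪ν m,u⟫) + m2 * (⟪m,w⟫ * ⟪ν m,w⟫) := by
    intro x hx m hm y hy hXx hXm hXy hcr1 hcr2 hgx hgy
    have hNx : (0:ℝ) < ⟪ν x, u⟫ := by
      have h1 := hsgn x hx hgx
      by_contra h; push_neg at h
      linarith only [h1, mul_nonneg hXx.le (neg_nonneg.2 h)]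
    have hNy : (0:ℝ) < ⟪ν y, u⟫ := by
      have h1 := hsgn y hy hgy
      by_contra h; push_neg at h
      linarith only [h1, mul_nonneg hXy.le (neg_nonneg.2 h)]
    have hxm := hpair x hx m hm
    have hmx := hpair m hm x hx
    have hmy := hpair m hm y hy
    have hym := hpair y hy m hm
    have hix := hinner x hx
    have him := hinner m hm
    have hiy := hinner y hy
    -- pair (x,m) data
    have pA1 : ⟪ν x,u⟫*((⟪m,u⟫:ℝ)-⟪x,u⟫) + ⟪ν x,w⟫*(⟪m,w⟫-⟪x,w⟫) ≤ 0 := hxm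
    have pA2 : (0:ℝ) ≤ ⟪ν m,u⟫*((⟪m,u⟫:ℝ)-⟪x,u⟫) + ⟪ν m,w⟫*(⟪m,w⟫-⟪x,w⟫) := by
      linarith only [hmx]
    have pA3 : (0:ℝ) < ⟪ν x,u⟫*⟪x,u⟫ + ⟪ν x,w⟫*⟪x,w⟫ := hix
    have pA4 : (0:ℝ) < ⟪ν m,u⟫*(⟪x,u⟫+((⟪m,u⟫:ℝ)-⟪x,u⟫)) + ⟪ν m,w⟫*(⟪x,w⟫+(⟪m,w⟫-⟪x,w⟫)) := by
      linarith only [him]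
    have pA5 : (0:ℝ) < ⟪x,u⟫*((⟪m,w⟫:ℝ)-⟪x,w⟫) - ⟪x,w⟫*(⟪m,u⟫-⟪x,u⟫) := by
      linarith only [hcr1]
    have pA7 : (0:ℝ) < ⟪x,u⟫+((⟪m,u⟫:ℝ)-⟪x,u⟫) := by linarith only [hXm]
    -- pair (m,y) data
    have pB1 : ⟪ν m,u⟫*((⟪y,u⟫:ℝ)-⟪m,u⟫) + ⟪ν m,w⟫*(⟪y,w⟫-⟪m,w⟫) ≤ 0 := hmy
    have pB2 : (0:ℝ) ≤ ⟪ν y,u⟫*((⟪y,u⟫:ℝ)-⟪m,u⟫) + ⟪ν y,w⟫*(⟪y,w⟫-⟪m,w⟫) := by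
      linarith only [hym]
    have pB3 : (0:ℝ) < ⟪ν m,u⟫*⟪m,u⟫ + ⟪ν m,w⟫*⟪m,w⟫ := him
    have pB4 : (0:ℝ) < ⟪ν y,u⟫*(⟪m,u⟫+((⟪y,u⟫:ℝ)-⟪m,u⟫)) + ⟪ν y,w⟫*(⟪m,w⟫+(⟪y,w⟫-⟪m,w⟫)) := by
      linarith only [hiy]
    have pB5 : (0:ℝ) < ⟪m,u⟫*((⟪y,w⟫:ℝ)-⟪m,w⟫) - ⟪m,w⟫*(⟪y,u⟫-⟪m,u⟫) := by
      linarith only [hcr2]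
    have pB7 : (0:ℝ) < ⟪m,u⟫+((⟪y,u⟫:ℝ)-⟪m,u⟫) := by linarith only [hXy]
    have hNm : (0:ℝ) < ⟪ν m, u⟫ := by
      rcases lt_trichotomy (⟪ν m, w⟫ : ℝ) 0 with hNm' | hNm' | hNm'
      · by_contra h; push_neg at h
        have hres := pair_iii ⟪x,u⟫ ⟪x,w⟫ (⟪m,u⟫-⟪x,u⟫) (⟪m,w⟫-⟪x,w⟫)
          ⟪ν x,u⟫ ⟪ν x,w⟫ ⟪ν m,u⟫ ⟪ν m,w⟫ pA1 pA2 pA3 pA4 pA5 hXx pA7 h hNm'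
        linarith
      · have h3 : ⟪ν m,w⟫*⟪m,w⟫ = (0:ℝ) := by rw [hNm', zero_mul]
        have h4 : (0:ℝ) < ⟪ν m,u⟫*⟪m,u⟫ := by linarith only [him, h3]
        by_contra h; push_neg at h
        linarith only [h4, mul_nonneg (neg_nonneg.2 h) hXm.le]
      · by_contra h; push_neg at h
        have hres := pair_ii ⟪m,u⟫ ⟪m,w⟫ (⟪y,u⟫-⟪m,u⟫) (⟪y,w⟫-⟪m,w⟫)
          ⟪ν m,u⟫ ⟪ν m,w⟫ ⟪ν y,u⟫ ⟪ν y,w⟫ pB1 pB2 pB3 pB4 pB5 hXm pB7 h hNm'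
        linarith
    have hcn1 : (0:ℝ) ≤ ⟪ν x,u⟫*⟪ν m,w⟫ - ⟪ν x,w⟫*⟪ν m,u⟫ :=
      pair_i ⟪x,u⟫ ⟪x,w⟫ (⟪m,u⟫-⟪x,u⟫) (⟪m,w⟫-⟪x,w⟫)
        ⟪ν x,u⟫ ⟪ν x,w⟫ ⟪ν m,u⟫ ⟪ν m,w⟫ pA1 pA2 pA3 pA4 pA5 hXx pA7 hNx hNm
    have hcn2 : (0:ℝ) ≤ ⟪ν m,u⟫*⟪ν y,w⟫ - ⟪ν m,w⟫*⟪ν y,u⟫ :=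
      pair_i ⟪m,u⟫ ⟪m,w⟫ (⟪y,u⟫-⟪m,u⟫) (⟪y,w⟫-⟪m,w⟫)
        ⟪ν m,u⟫ ⟪ν m,w⟫ ⟪ν y,u⟫ ⟪ν y,w⟫ pB1 pB2 pB3 pB4 pB5 hXm pB7 hNm hNy
    have hXNx : (0:ℝ) < ⟪x,u⟫*⟪ν x,u⟫ := hsgn x hx hgx
    have hXNy : (0:ℝ) < ⟪y,u⟫*⟪ν y,u⟫ := hsgn y hy hgy
    have hha : 0 < m1 + m2*((⟪x,w⟫/⟪x,u⟫)*(⟪ν x,w⟫/⟪ν x,u⟫)) := by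
      have heq : m1 + m2*((⟪x,w⟫/⟪x,u⟫)*(⟪ν x,w⟫/⟪ν x,u⟫))
          = (m1*(⟪x,u⟫*⟪ν x,u⟫)+m2*(⟪x,w⟫*⟪ν x,w⟫))/(⟪x,u⟫*⟪ν x,u⟫) := by
        field_simp
      rw [heq]; exact div_pos hgx hXNx
    have hhb : 0 < m1 + m2*((⟪y,w⟫/⟪y,u⟫)*(⟪ν y,w⟫/⟪ν y,u⟫)) := by
      have heq : m1 + m2*((⟪y,w⟫/⟪y,u⟫)*(⟪ν y,w⟫/⟪ν y,u⟫))
          = (m1*(⟪y,u⟫*⟪ν y,u⟫)+m2*(⟪y,w⟫*⟪ν y,w⟫))/(⟪y,u⟫*⟪ν y,u⟫) := by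
        field_simp
      rw [heq]; exact div_pos hgy hXNy
    have hq := quasi m1 m2 (⟪x,w⟫/⟪x,u⟫) (⟪m,w⟫/⟪m,u⟫) (⟪y,w⟫/⟪y,u⟫)
      (⟪ν x,w⟫/⟪ν x,u⟫) (⟪ν m,w⟫/⟪ν m,u⟫) (⟪ν y,w⟫/⟪ν y,u⟫) hm1 hm2
      ((div_lt_div_iff₀ hXx hXm).2 (by linarith only [hcr1]))
      ((div_lt_div_iff₀ hXm hXy).2 (by linarith only [hcr2]))
      ((div_le_div_iff₀ hNx hNm).2 (by linarith only [hcn1]))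
      ((div_le_div_iff₀ hNm hNy).2 (by linarith only [hcn2]))
      hha hhb
    have heq2 : m1*(⟪m,u⟫*⟪ν m,u⟫)+m2*(⟪m,w⟫*⟪ν m,w⟫)
        = (⟪m,u⟫*⟪ν m,u⟫)*(m1 + m2*((⟪m,w⟫/⟪m,u⟫)*(⟪ν m,w⟫/⟪ν m,u⟫))) := by
      field_simp
    rw [heq2]
    exact mul_pos (mul_pos hXm hNm) hq
  set S := {x : E | x ∈ frontier Ω ∧
      0 < m1 * (⟪x,u⟫ * ⟪ν x,u⟫) + m2 * (⟪x,w⟫ * ⟪ν x,w⟫) ∧ 0 < ⟪x,u⟫} with hSdef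
  set J := {t : ℝ | Φ t ∈ S} with hJdef
  have hSJ : S = Φ '' J := by
    apply Set.Subset.antisymm
    · intro x hx
      exact ⟨⟪x,w⟫/⟪x,u⟫, by rw [hJdef, Set.mem_setOf_eq, hrepr x hx.1 hx.2.2]; exact hx,
        hrepr x hx.1 hx.2.2⟩
    · rintro x ⟨t, ht, rfl⟩
      exact ht
  have hJoc : Set.OrdConnected J := by
    constructor
    intro t1 ht1 t2 ht2 t ht
    rcases eq_or_lt_of_le ht.1 with h1 | h1
    · rwa [← h1]
    rcases eq_or_lt_of_le ht.2 with h2 | h2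
    · rwa [h2]
    have hc1 : (0:ℝ) < ⟪Φ t1,u⟫*⟪Φ t,w⟫ - ⟪Φ t1,w⟫*⟪Φ t,u⟫ := by
      rw [hΦu, hΦw, hΦu, hΦw]
      have hA : (0:ℝ) < (gauge Ω (u + t1 • w))⁻¹ := inv_pos.2 (hgpos _ (hd0 t1))
      have hB : (0:ℝ) < (gauge Ω (u + t • w))⁻¹ := inv_pos.2 (hgpos _ (hd0 t))
      nlinarith [mul_pos (mul_pos hA hB) (sub_pos.2 h1)]
    have hc2 : (0:ℝ) < ⟪Φ t,u⟫*⟪Φ t2,w⟫ - ⟪Φ t,w⟫*⟪Φ t2,u⟫ := by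
      rw [hΦu, hΦw, hΦu, hΦw]
      have hA : (0:ℝ) < (gauge Ω (u + t • w))⁻¹ := inv_pos.2 (hgpos _ (hd0 t))
      have hB : (0:ℝ) < (gauge Ω (u + t2 • w))⁻¹ := inv_pos.2 (hgpos _ (hd0 t2))
      nlinarith [mul_pos (mul_pos hA hB) (sub_pos.2 h2)]
    have hgm := key (Φ t1) (hΦF t1) (Φ t) (hΦF t) (Φ t2) (hΦF t2)
      (hΦupos t1) (hΦupos t) (hΦupos t2) hc1 hc2 ht1.2.1 ht2.2.1
    exact ⟨hΦF t, hgm, hΦupos t⟩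
  rw [hSJ]
  exact hJoc.isPreconnected.image Φ hΦcont.continuousOn

theorem stmt_13 (c lam₁ lam₂ H : ℝ) (hlam₁ : 0 < lam₁) (hlam₂ : lam₂ ≤ 0)
    (hsum : lam₁ + lam₂ = H) (hH : 0 < H)
    (Ω : Set (EuclideanSpace ℝ (Fin 2)))
    (hΩo : IsOpen Ω) (hΩb : Bornology.IsBounded Ω)
    (hΩconv : Convex ℝ Ω) (h0 : (0 : EuclideanSpace ℝ (Fin 2)) ∈ Ω)
    (ν : EuclideanSpace ℝ (Fin 2) → EuclideanSpace ℝ (Fin 2))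
    (hν : ∀ x ∈ frontier Ω, ‖ν x‖ = 1 ∧
      ∀ z ∈ closure Ω, (inner ℝ (ν x) (z - x) : ℝ) ≤ 0)
    (q : EuclideanSpace ℝ (Fin 2) → ℝ)
    (hq : ∀ x, q x = c + (lam₁ / 2) * (x 0) ^ 2 + (lam₂ / 2) * (x 1) ^ 2)
    (dqn : EuclideanSpace ℝ (Fin 2) → ℝ)
    (hdqn : ∀ x, dqn x = lam₁ * x 0 * (ν x) 0 + lam₂ * x 1 * (ν x) 1) :
    (∃ A B : Set (EuclideanSpace ℝ (Fin 2)),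
      IsPreconnected A ∧ IsPreconnected B ∧
      {x ∈ frontier Ω | 0 < dqn x} = A ∪ B) ∧
    (∃ A B : Set (EuclideanSpace ℝ (Fin 2)),
      IsPreconnected A ∧ IsPreconnected B ∧
      {x ∈ frontier Ω | dqn x < 0} = A ∪ B) := by
  classical
  have hinner2 : ∀ a b : (EuclideanSpace ℝ (Fin 2)), ⟪a,b⟫ = a 0 * b 0 + a 1 * b 1 := by
    intro a b
    simp [PiLp.inner_apply, RCLike.inner_apply, Fin.sum_univ_two]
    ring
  set u1v : (EuclideanSpace ℝ (Fin 2)) := EuclideanSpace.single 0 (1:ℝ) with hu1vdef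
  set w1v : (EuclideanSpace ℝ (Fin 2)) := EuclideanSpace.single 1 (1:ℝ) with hw1vdef
  have hc00 : u1v 0 = 1 := by simp [hu1vdef, EuclideanSpace.single_apply]
  have hc01 : u1v 1 = 0 := by simp [hu1vdef, EuclideanSpace.single_apply]
  have hc10 : w1v 0 = 0 := by simp [hw1vdef, EuclideanSpace.single_apply]
  have hc11 : w1v 1 = 1 := by simp [hw1vdef, EuclideanSpace.single_apply]
  have hsing0 : ∀ a : (EuclideanSpace ℝ (Fin 2)), ⟪a, u1v⟫ = a 0 := by
    intro a; rw [hinner2, hc00, hc01]; ring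
  have hsing1 : ∀ a : (EuclideanSpace ℝ (Fin 2)), ⟪a, w1v⟫ = a 1 := by
    intro a; rw [hinner2, hc10, hc11]; ring
  have hexpb : ∀ a : (EuclideanSpace ℝ (Fin 2)), a = a 0 • u1v + a 1 • w1v := by
    intro a
    ext i
    fin_cases i <;>
      simp [hu1vdef, hw1vdef, PiLp.add_apply, PiLp.smul_apply, smul_eq_mul,
        EuclideanSpace.single_apply]
  have huu1 : ⟪u1v,u1v⟫ = (1:ℝ) := by rw [hsing0, hc00]
  have hww1 : ⟪w1v,w1v⟫ = (1:ℝ) := by rw [hsing1, hc11]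
  have huw1 : ⟪u1v,w1v⟫ = (0:ℝ) := by rw [hsing1, hc01]
  have hwu1 : ⟪w1v,u1v⟫ = (0:ℝ) := by rw [hsing0, hc10]
  -- normal field facts
  have hsupp : ∀ x ∈ frontier Ω, ∀ z ∈ closure Ω, ⟪ν x, z - x⟫ ≤ 0 :=
    fun x hx => (hν x hx).2
  obtain ⟨ε, hε, hball⟩ := Metric.isOpen_iff.1 hΩo 0 h0
  have hν0 : ∀ x ∈ frontier Ω, 0 < ⟪ν x, x⟫ := by
    intro x hx
    have hzmem : (ε/2) • ν x ∈ Metric.ball (0:(EuclideanSpace ℝ (Fin 2))) ε := by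
      rw [mem_ball_zero_iff, norm_smul, (hν x hx).1]
      rw [Real.norm_eq_abs, abs_of_pos (by linarith : (0:ℝ) < ε/2)]
      linarith
    have hz : (ε/2) • ν x ∈ closure Ω := subset_closure (hball hzmem)
    have h2 := (hν x hx).2 _ hz
    rw [inner_sub_right] at h2
    have h3 : ⟪ν x, (ε/2) • ν x⟫ = ε/2 := by
      rw [real_inner_smul_right, real_inner_self_eq_norm_mul_norm, (hν x hx).1]
      ring
    rw [h3] at h2
    linarith
  -- frame 1 : (u1v, w1v)
  have P1 : IsPreconnected {x : (EuclideanSpace ℝ (Fin 2)) | x ∈ frontier Ω ∧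
      0 < lam₁*(x 0*(ν x) 0)+lam₂*(x 1*(ν x) 1) ∧ 0 < x 0} := by
    have h := half Ω hΩo hΩb hΩconv h0 ν hsupp hν0 u1v w1v
      (by intro a; rw [hsing0, hsing1]; exact hexpb a) huu1 hww1 huw1
      lam₁ lam₂ hlam₁.le hlam₂
    have e : {x : (EuclideanSpace ℝ (Fin 2)) | x ∈ frontier Ω ∧
        0 < lam₁ * (⟪x,u1v⟫ * ⟪ν x,u1v⟫) + lam₂ * (⟪x,w1v⟫ * ⟪ν x,w1v⟫) ∧ 0 < ⟪x,u1v⟫}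
        = {x : (EuclideanSpace ℝ (Fin 2)) | x ∈ frontier Ω ∧
        0 < lam₁*(x 0*(ν x) 0)+lam₂*(x 1*(ν x) 1) ∧ 0 < x 0} := by
      ext x
      simp only [Set.mem_setOf_eq, hsing0, hsing1]
    rw [e] at h
    exact h
  -- frame 2 : (-u1v, -w1v)
  have P2 : IsPreconnected {x : (EuclideanSpace ℝ (Fin 2)) | x ∈ frontier Ω ∧
      0 < lam₁*(x 0*(ν x) 0)+lam₂*(x 1*(ν x) 1) ∧ 0 < -x 0} := by
    have h := half Ω hΩo hΩb hΩconv h0 ν hsupp hν0 (-u1v) (-w1v)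
      (by intro a
          rw [inner_neg_right, inner_neg_right, hsing0, hsing1, neg_smul_neg, neg_smul_neg]
          exact hexpb a)
      (by rw [inner_neg_neg]; exact huu1) (by rw [inner_neg_neg]; exact hww1)
      (by rw [inner_neg_neg]; exact huw1)
      lam₁ lam₂ hlam₁.le hlam₂
    have e : {x : (EuclideanSpace ℝ (Fin 2)) | x ∈ frontier Ω ∧
        0 < lam₁ * (⟪x,-u1v⟫ * ⟪ν x,-u1v⟫) + lam₂ * (⟪x,-w1v⟫ * ⟪ν x,-w1v⟫) ∧ 0 < ⟪x,-u1v⟫}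
        = {x : (EuclideanSpace ℝ (Fin 2)) | x ∈ frontier Ω ∧
        0 < lam₁*(x 0*(ν x) 0)+lam₂*(x 1*(ν x) 1) ∧ 0 < -x 0} := by
      ext x
      simp only [Set.mem_setOf_eq, inner_neg_right, hsing0, hsing1]
      constructor
      · rintro ⟨h1,h2,h3⟩
        exact ⟨h1, by linarith only [h2], by linarith only [h3]⟩
      · rintro ⟨h1,h2,h3⟩
        exact ⟨h1, by linarith only [h2], by linarith only [h3]⟩
    rw [e] at h
    exact h
  -- frame 3 : (w1v, -u1v), coefficients (-lam₂, -lam₁)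
  have P3 : IsPreconnected {x : (EuclideanSpace ℝ (Fin 2)) | x ∈ frontier Ω ∧
      lam₁*(x 0*(ν x) 0)+lam₂*(x 1*(ν x) 1) < 0 ∧ 0 < x 1} := by
    have h := half Ω hΩo hΩb hΩconv h0 ν hsupp hν0 w1v (-u1v)
      (by intro a
          rw [inner_neg_right, hsing0, hsing1, neg_smul_neg]
          exact (hexpb a).trans (add_comm _ _))
      hww1 (by rw [inner_neg_neg]; exact huu1) (by rw [inner_neg_right, hwu1]; ring)
      (-lam₂) (-lam₁) (by linarith) (by linarith)
    have e : {x : (EuclideanSpace ℝ (Fin 2)) | x ∈ frontier Ω ∧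
        0 < -lam₂ * (⟪x,w1v⟫ * ⟪ν x,w1v⟫) + -lam₁ * (⟪x,-u1v⟫ * ⟪ν x,-u1v⟫) ∧ 0 < ⟪x,w1v⟫}
        = {x : (EuclideanSpace ℝ (Fin 2)) | x ∈ frontier Ω ∧
        lam₁*(x 0*(ν x) 0)+lam₂*(x 1*(ν x) 1) < 0 ∧ 0 < x 1} := by
      ext x
      simp only [Set.mem_setOf_eq, inner_neg_right, hsing0, hsing1]
      constructor
      · rintro ⟨h1,h2,h3⟩
        exact ⟨h1, by nlinarith only [h2], h3⟩
      · rintro ⟨h1,h2,h3⟩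
        exact ⟨h1, by nlinarith only [h2], h3⟩
    rw [e] at h
    exact h
  -- frame 4 : (-w1v, u1v), coefficients (-lam₂, -lam₁)
  have P4 : IsPreconnected {x : (EuclideanSpace ℝ (Fin 2)) | x ∈ frontier Ω ∧
      lam₁*(x 0*(ν x) 0)+lam₂*(x 1*(ν x) 1) < 0 ∧ 0 < -x 1} := by
    have h := half Ω hΩo hΩb hΩconv h0 ν hsupp hν0 (-w1v) u1v
      (by intro a
          rw [inner_neg_right, hsing0, hsing1, neg_smul_neg]
          exact (hexpb a).trans (add_comm _ _))
      (by rw [inner_neg_neg]; exact hww1) huu1 (by rw [inner_neg_left, hwu1]; ring)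
      (-lam₂) (-lam₁) (by linarith) (by linarith)
    have e : {x : (EuclideanSpace ℝ (Fin 2)) | x ∈ frontier Ω ∧
        0 < -lam₂ * (⟪x,-w1v⟫ * ⟪ν x,-w1v⟫) + -lam₁ * (⟪x,u1v⟫ * ⟪ν x,u1v⟫) ∧ 0 < ⟪x,-w1v⟫}
        = {x : (EuclideanSpace ℝ (Fin 2)) | x ∈ frontier Ω ∧
        lam₁*(x 0*(ν x) 0)+lam₂*(x 1*(ν x) 1) < 0 ∧ 0 < -x 1} := by
      ext x
      simp only [Set.mem_setOf_eq, inner_neg_right, hsing0, hsing1]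
      constructor
      · rintro ⟨h1,h2,h3⟩
        exact ⟨h1, by nlinarith only [h2], by linarith only [h3]⟩
      · rintro ⟨h1,h2,h3⟩
        exact ⟨h1, by nlinarith only [h2], by linarith only [h3]⟩
    rw [e] at h
    exact h
  constructor
  · refine ⟨_, _, P1, P2, ?_⟩
    ext x
    simp only [Set.mem_setOf_eq, Set.mem_union, hdqn]
    constructor
    · rintro ⟨hxF, hdq⟩
      have hin := hν0 x hxF
      rw [hinner2] at hin
      have hx0 : x 0 ≠ 0 := by
        intro h0
        have e1 : lam₁ * x 0 * (ν x) 0 = 0 := by rw [h0]; ring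
        have e2 : (ν x) 0 * x 0 = 0 := by rw [h0]; ring
        rcases hlam₂.lt_or_eq with hl | hl
        · have h4 : x 1 * (ν x) 1 < 0 := by
            by_contra hcon
            push_neg at hcon
            have := mul_nonneg (neg_nonneg.2 hl.le) hcon
            nlinarith only [hdq, e1, this]
          nlinarith only [hin, e2, h4]
        · rw [hl] at hdq
          nlinarith only [hdq, e1]
      rcases hx0.lt_or_gt with h | h
      · right
        exact ⟨hxF, by nlinarith only [hdq], by linarith only [h]⟩
      · left
        exact ⟨hxF, by nlinarith only [hdq], h⟩
    · rintro (⟨hxF, hg, _⟩ | ⟨hxF, hg, _⟩) <;>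
        exact ⟨hxF, by nlinarith only [hg]⟩
  · refine ⟨_, _, P3, P4, ?_⟩
    ext x
    simp only [Set.mem_setOf_eq, Set.mem_union, hdqn]
    constructor
    · rintro ⟨hxF, hdq⟩
      have hin := hν0 x hxF
      rw [hinner2] at hin
      have hx1 : x 1 ≠ 0 := by
        intro h1
        have e1 : lam₂ * x 1 * (ν x) 1 = 0 := by rw [h1]; ring
        have e2 : (ν x) 1 * x 1 = 0 := by rw [h1]; ring
        have h4 : x 0 * (ν x) 0 < 0 := by
          by_contra hcon
          push_neg at hcon
          have := mul_nonneg hlam₁.le hcon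
          nlinarith only [hdq, e1, this]
        nlinarith only [hin, e2, h4]
      rcases hx1.lt_or_gt with h | h
      · right
        exact ⟨hxF, by nlinarith only [hdq], by linarith only [h]⟩
      · left
        exact ⟨hxF, by nlinarith only [hdq], h⟩
    · rintro (⟨hxF, hg, _⟩ | ⟨hxF, hg, _⟩) <;>
        exact ⟨hxF, by nlinarith only [hg]⟩
end

section
/- Let u : ℝ² → ℝ be a C¹ function, proper and bounded below, whose critical points form a finite set {p₁,…,p_k}, each a non-degenerate local minimum. Assume further that for all sufficiently large z, the sublevel set N_z = {x : u(x) < z} has connected boundary (is a single closed curve). Then k = 1, i.e., u has exactly one critical point. -/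
section helpers
open Set Metric Filter Topology

variable {E : Type*} [NormedAddCommGroup E] [NormedSpace ℝ E]

theorem sublevel_compact {u : E → ℝ} (hc : Continuous u)
    (hproper : Tendsto u (cocompact E) atTop) (c : ℝ) : IsCompact {x | u x ≤ c} := by
  have h : ∀ᶠ x in cocompact E, c + 1 ≤ u x := hproper.eventually (eventually_ge_atTop (c + 1))
  rcases mem_cocompact.1 h with ⟨M, hM, hsub⟩
  refine hM.of_isClosed_subset (isClosed_le hc continuous_const) ?_
  intro x hx
  by_contra hxM
  have := hsub hxM
  simp only [mem_setOf_eq] at this hx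
  linarith

theorem joinedIn_of_segment {s : Set E} {a b : E} (h : segment ℝ a b ⊆ s) : JoinedIn s a b :=
  (((convex_segment a b).isPathConnected ⟨a, left_mem_segment ℝ a b⟩).joinedIn a
    (left_mem_segment ℝ a b) b (right_mem_segment ℝ a b)).mono h

theorem nested_continua {F : ℕ → Set E} (hanti : Antitone F) (hcomp : ∀ n, IsCompact (F n))
    (hconn : ∀ n, IsPreconnected (F n)) : IsPreconnected (⋂ n, F n) := by
  set G := ⋂ n, F n with hG
  have hGclosed : IsClosed G := isClosed_iInter fun n => (hcomp n).isClosed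
  by_contra hnc
  rw [isPreconnected_iff_subset_of_fully_disjoint_closed hGclosed] at hnc
  push_neg at hnc
  obtain ⟨C₁, C₂, hC₁, hC₂, hcover, hdisj, hns₁, hns₂⟩ := hnc
  have hA : IsClosed (G ∩ C₁) := hGclosed.inter hC₁
  have hB : IsClosed (G ∩ C₂) := hGclosed.inter hC₂
  have hABdisj : Disjoint (G ∩ C₁) (G ∩ C₂) :=
    (hdisj.mono (inter_subset_right) (inter_subset_right))
  obtain ⟨U, V, hU, hV, hAU, hBV, hUV⟩ := normal_separation hA hB hABdisj
  have hGUV : G ⊆ U ∪ V := by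
    intro x hx
    rcases hcover hx with h | h
    · exact Or.inl (hAU ⟨hx, h⟩)
    · exact Or.inr (hBV ⟨hx, h⟩)
  have hex : ∃ n, F n ⊆ U ∪ V := by
    by_contra hall
    push_neg at hall
    have hne : ∀ n, (F n ∩ (U ∪ V)ᶜ).Nonempty := by
      intro n
      rcases not_subset.1 (hall n) with ⟨x, hx1, hx2⟩
      exact ⟨x, hx1, hx2⟩
    have := IsCompact.nonempty_iInter_of_sequence_nonempty_isCompact_isClosed
      (fun n => F n ∩ (U ∪ V)ᶜ)
      (fun n => inter_subset_inter_left _ (hanti (Nat.le_succ n))) hne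
      ((hcomp 0).inter_right (hU.union hV).isClosed_compl)
      (fun n => (hcomp n).isClosed.inter (hU.union hV).isClosed_compl)
    obtain ⟨x, hx⟩ := this
    rw [← iInter_inter] at hx
    exact hx.2 (hGUV hx.1)
  obtain ⟨n, hn⟩ := hex
  obtain ⟨x₁, hx₁G, hx₁⟩ := not_subset.1 hns₁
  obtain ⟨x₂, hx₂G, hx₂⟩ := not_subset.1 hns₂
  have hx₁V : x₁ ∈ V := hBV ⟨hx₁G, (hcover hx₁G).resolve_left hx₁⟩
  have hx₂U : x₂ ∈ U := hAU ⟨hx₂G, (hcover hx₂G).resolve_right hx₂⟩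
  have hGF : G ⊆ F n := iInter_subset _ n
  obtain ⟨y, hy⟩ := (hconn n) U V hU hV hn ⟨x₂, hGF hx₂G, hx₂U⟩ ⟨x₁, hGF hx₁G, hx₁V⟩
  exact (hUV.ne_of_mem hy.2.1 hy.2.2) rfl

theorem descend {u : E → ℝ} (hud : Differentiable ℝ u) {x₀ v : E} {R : ℝ}
    (hder : ∀ y ∈ ball x₀ R, (1:ℝ)/2 ≤ fderiv ℝ u y v) :
    ∀ y ∈ ball x₀ R, ∀ t, 0 ≤ t → y - t • v ∈ ball x₀ R → u (y - t • v) + t/2 ≤ u y := by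
  intro y hy t ht hyt
  rcases eq_or_lt_of_le ht with rfl | htpos
  · simp
  have hseg : ∀ s ∈ Icc (0:ℝ) t, y - s • v ∈ ball x₀ R := by
    intro s hs
    have : y - s • v = (1 - s/t) • y + (s/t) • (y - t • v) := by
      have h1 : (s/t) * t = s := div_mul_cancel₀ s htpos.ne'
      match_scalars <;> field_simp <;> ring
    rw [this]
    exact (convex_ball x₀ R) hy hyt (by
      have := div_le_one_of_le₀ hs.2 ht
      linarith) (div_nonneg hs.1 ht) (by ring)
  have hderiv : ∀ s : ℝ, HasDerivAt (fun s => u (y - s • v) + s/2)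
      (fderiv ℝ u (y - s • v) (-v) + 1/2) s := by
    intro s
    have h1 : HasDerivAt (fun s : ℝ => y - s • v) (-v) s := by
      simpa using ((hasDerivAt_id s).smul_const v).const_sub y
    have h2 : HasDerivAt (fun s => u (y - s • v)) (fderiv ℝ u (y - s • v) (-v)) s :=
      (hud (y - s • v)).hasFDerivAt.comp_hasDerivAt s h1
    exact h2.add ((hasDerivAt_id s).div_const 2)
  have hanti : AntitoneOn (fun s => u (y - s • v) + s/2) (Icc 0 t) := by
    apply antitoneOn_of_deriv_nonpos (convex_Icc 0 t)
    · exact fun s _ => ((hderiv s).continuousAt).continuousWithinAt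
    · exact fun s _ => ((hderiv s).differentiableAt).differentiableWithinAt
    · intro s hs
      rw [interior_Icc] at hs
      rw [(hderiv s).deriv]
      have := hder (y - s • v) (hseg s ⟨hs.1.le, hs.2.le⟩)
      rw [map_neg]
      linarith
  have h0 : (0:ℝ) ∈ Icc (0:ℝ) t := ⟨le_rfl, ht⟩
  have hT : t ∈ Icc (0:ℝ) t := ⟨ht, le_rfl⟩
  have := hanti h0 hT ht
  simpa using this

set_option maxHeartbeats 1000000 in
theorem local_onesided [FiniteDimensional ℝ E] {u : E → ℝ} (hu : ContDiff ℝ 1 u) {x₀ : E} {z : ℝ}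
    (hz : u x₀ = z) (hreg : fderiv ℝ u x₀ ≠ 0) :
    ∃ W W' : Set E, W ∈ 𝓝 x₀ ∧ W ⊆ W' ∧ IsPreconnected {y ∈ W' | u y < z} ∧
      ∀ y ∈ W, u y ≤ z → y ∈ closure {y ∈ W' | u y < z} := by
  have hud : Differentiable ℝ u := hu.differentiable one_ne_zero
  -- find direction v with derivative 1
  obtain ⟨v₀, hv₀⟩ : ∃ v₀, fderiv ℝ u x₀ v₀ ≠ 0 := by
    by_contra h
    push_neg at h
    exact hreg (ContinuousLinearMap.ext fun w => by simp [h w])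
  set v : E := (fderiv ℝ u x₀ v₀)⁻¹ • v₀ with hv
  have hLv : fderiv ℝ u x₀ v = 1 := by
    rw [hv, map_smul, smul_eq_mul, inv_mul_cancel₀ hv₀]
  -- continuity of directional derivative
  have hcont : Continuous fun y => fderiv ℝ u y v :=
    (hu.continuous_fderiv one_ne_zero).clm_apply continuous_const
  -- radius with derivative bound
  obtain ⟨R, hRpos, hder⟩ : ∃ R > 0, ∀ y ∈ ball x₀ R, (1:ℝ)/2 ≤ fderiv ℝ u y v := by
    have hopen : IsOpen {y | (1:ℝ)/2 < fderiv ℝ u y v} := isOpen_lt continuous_const hcont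
    have hx : x₀ ∈ {y | (1:ℝ)/2 < fderiv ℝ u y v} := by simp [hLv]; norm_num
    obtain ⟨R, hRpos, hball⟩ := Metric.isOpen_iff.1 hopen x₀ hx
    exact ⟨R, hRpos, fun y hy => (hball hy).le⟩
  -- Lipschitz bound on closed ball
  obtain ⟨C, hC⟩ := (isCompact_closedBall x₀ R).exists_bound_of_continuousOn
    ((hu.continuous_fderiv one_ne_zero).continuousOn)
  set Λ : ℝ := max C 1 with hΛ
  have hΛ1 : (1:ℝ) ≤ Λ := le_max_right _ _
  have hΛ0 : (0:ℝ) < Λ := lt_of_lt_of_le one_pos hΛ1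
  have hlip : ∀ a ∈ closedBall x₀ R, ∀ b ∈ closedBall x₀ R, |u a - u b| ≤ Λ * ‖a - b‖ := by
    intro a ha b hb
    have := Convex.norm_image_sub_le_of_norm_fderiv_le (f := u) (C := Λ) (s := closedBall x₀ R)
      (fun x _ => hud x) (fun x hx => le_trans (hC x hx) (le_max_left _ _))
      (convex_closedBall x₀ R) hb ha
    simpa [Real.norm_eq_abs] using this
  set σ : ℝ := R / (2 * (‖v‖ + 1)) with hσ
  have hσpos : 0 < σ := by positivity
  have hσv : σ * ‖v‖ ≤ R / 2 := by
    rw [hσ]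
    rw [div_mul_eq_mul_div, div_le_div_iff₀ (by positivity) (by norm_num)]
    have : ‖v‖ ≤ ‖v‖ + 1 := by linarith
    nlinarith [norm_nonneg v, hRpos]
  set ρ : ℝ := min (σ / (8 * Λ)) (R / 4) with hρ
  have hρpos : 0 < ρ := lt_min (by positivity) (by positivity)
  have hρ1 : ρ ≤ σ / (8 * Λ) := min_le_left _ _
  have hρ2 : ρ ≤ R / 4 := min_le_right _ _
  have hΛρ : Λ * ρ ≤ σ / 8 := by
    have := mul_le_mul_of_nonneg_left hρ1 hΛ0.le
    calc Λ * ρ ≤ Λ * (σ / (8 * Λ)) := this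
    _ = σ / 8 := by field_simp
  -- the tube
  set W' : Set E := {w | ∃ y ∈ ball x₀ ρ, ∃ t ∈ Icc (0:ℝ) σ, w = y - t • v} with hW'
  have htube : ∀ y ∈ ball x₀ ρ, ∀ t ∈ Icc (0:ℝ) σ, y - t • v ∈ ball x₀ R := by
    intro y hy t ht
    have : ‖y - t • v - x₀‖ ≤ ‖y - x₀‖ + t * ‖v‖ := by
      calc ‖y - t • v - x₀‖ = ‖(y - x₀) - t • v‖ := by rw [sub_right_comm]
      _ ≤ ‖y - x₀‖ + ‖t • v‖ := norm_sub_le _ _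
      _ = ‖y - x₀‖ + t * ‖v‖ := by rw [norm_smul, Real.norm_eq_abs, abs_of_nonneg ht.1]
    have h1 : ‖y - x₀‖ < ρ := mem_ball_iff_norm.1 hy
    have h2 : t * ‖v‖ ≤ σ * ‖v‖ := mul_le_mul_of_nonneg_right ht.2 (norm_nonneg v)
    rw [mem_ball_iff_norm]
    have hρR : ρ ≤ R / 4 := hρ2
    calc ‖y - t • v - x₀‖ ≤ ‖y - x₀‖ + t * ‖v‖ := this
    _ < ρ + σ * ‖v‖ := by linarith
    _ ≤ R / 4 + R / 2 := by linarith
    _ < R := by linarith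
  have htubecb : ∀ y ∈ ball x₀ ρ, ∀ t ∈ Icc (0:ℝ) σ, y - t • v ∈ closedBall x₀ R := fun y hy t ht =>
    ball_subset_closedBall (htube y hy t ht)
  have hM := descend hud hder
  set P : Set E := {y ∈ W' | u y < z} with hP
  -- u estimate at depth t
  have hdepth : ∀ y ∈ ball x₀ ρ, ∀ t ∈ Icc (0:ℝ) σ, u (y - t • v) ≤ u y - t / 2 := by
    intro y hy t ht
    have hyR : y ∈ ball x₀ R := ball_subset_ball (by linarith) hy
    have := hM y hyR t ht.1 (htube y hy t ht)
    linarith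
  have hstep : ∀ y ∈ ball x₀ ρ, ∀ t ∈ Icc (0:ℝ) σ, ∀ s, t ≤ s → s ≤ σ →
      u (y - s • v) ≤ u (y - t • v) := by
    intro y hy t ht s hts hsσ
    have hsmem : s ∈ Icc (0:ℝ) σ := ⟨le_trans ht.1 hts, hsσ⟩
    have heq : (y - t • v) - (s - t) • v = y - s • v := by module
    have h := hM (y - t • v) (htube y hy t ht) (s - t) (by linarith)
      (by rw [heq]; exact htube y hy s hsmem)
    rw [heq] at h
    linarith
  set base : E := x₀ - σ • v with hbase
  have hx₀ρ : x₀ ∈ ball x₀ ρ := mem_ball_self hρpos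
  have hσmem : σ ∈ Icc (0:ℝ) σ := ⟨hσpos.le, le_rfl⟩
  have hbaseP : base ∈ P := by
    refine ⟨⟨x₀, hx₀ρ, σ, hσmem, rfl⟩, ?_⟩
    have := hdepth x₀ hx₀ρ σ hσmem
    rw [hz] at this
    linarith
  -- vertical segments
  have hvert : ∀ y ∈ ball x₀ ρ, ∀ t ∈ Icc (0:ℝ) σ, u (y - t • v) < z →
      JoinedIn P (y - t • v) (y - σ • v) := by
    intro y hy t ht hlt
    apply joinedIn_of_segment
    intro c hc
    rw [segment_eq_image'] at hc
    obtain ⟨θ, hθ, rfl⟩ := hc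
    have heq : y - t • v + θ • (y - σ • v - (y - t • v)) = y - (t + θ * (σ - t)) • v := by
      module
    show y - t • v + θ • (y - σ • v - (y - t • v)) ∈ P
    rw [heq]
    set s : ℝ := t + θ * (σ - t) with hs
    have hts : t ≤ s := by nlinarith [hθ.1, ht.2]
    have hsσ : s ≤ σ := by nlinarith [hθ.2, ht.2]
    have hsmem : s ∈ Icc (0:ℝ) σ := ⟨le_trans ht.1 hts, hsσ⟩
    refine ⟨⟨y, hy, s, hsmem, rfl⟩, ?_⟩
    have := hstep y hy t ht s hts hsσ
    linarith
  -- horizontal segments at depth σ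
  have hhoriz : ∀ y ∈ ball x₀ ρ, JoinedIn P (y - σ • v) base := by
    intro y hy
    apply joinedIn_of_segment
    intro c hc
    rw [segment_eq_image'] at hc
    obtain ⟨θ, hθ, rfl⟩ := hc
    have heq : y - σ • v + θ • (base - (y - σ • v)) = (y + θ • (x₀ - y)) - σ • v := by
      rw [hbase]; module
    show y - σ • v + θ • (base - (y - σ • v)) ∈ P
    rw [heq]
    set yθ : E := y + θ • (x₀ - y) with hyθ
    have hyθρ : yθ ∈ ball x₀ ρ := by
      rw [mem_ball_iff_norm]
      have : yθ - x₀ = (1 - θ) • (y - x₀) := by rw [hyθ]; module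
      rw [this, norm_smul, Real.norm_eq_abs, abs_of_nonneg (by linarith [hθ.2])]
      have h1 : ‖y - x₀‖ < ρ := mem_ball_iff_norm.1 hy
      nlinarith [norm_nonneg (y - x₀), hθ.1, hθ.2]
    refine ⟨⟨yθ, hyθρ, σ, hσmem, rfl⟩, ?_⟩
    -- estimate
    have hycb : y ∈ closedBall x₀ R := ball_subset_closedBall (ball_subset_ball (by linarith) hy)
    have hx₀cb : x₀ ∈ closedBall x₀ R := mem_closedBall_self hRpos.le
    have h1 : |u y - u x₀| ≤ Λ * ‖y - x₀‖ := hlip y hycb x₀ hx₀cb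
    have h2 : |u (yθ - σ • v) - u (y - σ • v)| ≤ Λ * ‖(yθ - σ • v) - (y - σ • v)‖ :=
      hlip _ (htubecb yθ hyθρ σ hσmem) _ (htubecb y hy σ hσmem)
    have h3 : u (y - σ • v) ≤ u y - σ / 2 := hdepth y hy σ hσmem
    have h4 : ‖(yθ - σ • v) - (y - σ • v)‖ ≤ ρ := by
      have : (yθ - σ • v) - (y - σ • v) = θ • (x₀ - y) := by rw [hyθ]; module
      rw [this, norm_smul, Real.norm_eq_abs, abs_of_nonneg hθ.1]
      have h5 : ‖x₀ - y‖ < ρ := by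
        rw [norm_sub_rev]; exact mem_ball_iff_norm.1 hy
      nlinarith [hθ.1, hθ.2, norm_nonneg (x₀ - y)]
    have h6 : ‖y - x₀‖ ≤ ρ := (mem_ball_iff_norm.1 hy).le
    have h7 : u y ≤ z + Λ * ρ := by
      have := abs_le.1 h1
      have h8 : Λ * ‖y - x₀‖ ≤ Λ * ρ := mul_le_mul_of_nonneg_left h6 hΛ0.le
      rw [hz] at this
      linarith [this.2, h8]
    have h9 : Λ * ‖(yθ - σ • v) - (y - σ • v)‖ ≤ Λ * ρ :=
      mul_le_mul_of_nonneg_left h4 hΛ0.le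
    have h10 := (abs_le.1 h2).2
    have hσ8 : Λ * ρ ≤ σ / 8 := hΛρ
    linarith
  have hpath : IsPathConnected P := by
    refine ⟨base, hbaseP, ?_⟩
    rintro w ⟨⟨y, hy, t, ht, rfl⟩, hwu⟩
    exact ((hvert y hy t ht hwu).trans (hhoriz y hy)).symm
  have hpre : IsPreconnected P := hpath.isConnected.isPreconnected
  have hclosure : ∀ y ∈ ball x₀ ρ, u y ≤ z → y ∈ closure P := by
    intro y hy hyz
    have htend : Tendsto (fun n : ℕ => y - (σ / (n + 1)) • v) atTop (𝓝 y) := by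
      have h0 : Tendsto (fun n : ℕ => σ / (n + 1)) atTop (𝓝 0) := by
        have := tendsto_one_div_add_atTop_nhds_zero_nat.const_mul σ
        simpa [div_eq_mul_inv, mul_comm] using this
      have h1 : Tendsto (fun n : ℕ => (σ / (n + 1)) • v) atTop (𝓝 (0 : E)) := by
        simpa using h0.smul_const v
      have := (tendsto_const_nhds (x := y) (f := atTop)).sub h1
      simpa using this
    refine mem_closure_of_tendsto htend (Filter.Eventually.of_forall fun n => ?_)
    have hn1 : (1:ℝ) ≤ (n:ℝ) + 1 := by exact_mod_cast Nat.one_le_iff_ne_zero.2 (Nat.succ_ne_zero n)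
    have htn0 : 0 < σ / (n + 1) := by positivity
    have htnσ : σ / (n + 1) ≤ σ := by
      rw [div_le_iff₀ (by positivity)]
      nlinarith [hσpos.le]
    have htnmem : σ / (n + 1) ∈ Icc (0:ℝ) σ := ⟨htn0.le, htnσ⟩
    refine ⟨⟨y, hy, σ / (n + 1), htnmem, rfl⟩, ?_⟩
    have := hdepth y hy (σ / (n + 1)) htnmem
    linarith
  exact ⟨ball x₀ ρ, W', ball_mem_nhds x₀ hρpos,
    fun w hw => ⟨w, hw, 0, ⟨le_rfl, hσpos.le⟩, by simp⟩, hpre, hclosure⟩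

set_option maxHeartbeats 1000000 in
theorem sublevel_preconnected [FiniteDimensional ℝ E] [Nontrivial E] {u : E → ℝ} {z : ℝ}
    (hu : ContDiff ℝ 1 u) (hcomp : IsCompact {x | u x ≤ z})
    (hreg : ∀ x, u x = z → fderiv ℝ u x ≠ 0)
    (hfront : IsPreconnected (frontier {x | u x < z})) :
    IsPreconnected {x | u x < z} := by
  by_contra hnc
  have hucont : Continuous u := hu.continuous
  have hopen : IsOpen {x | u x < z} := isOpen_lt hucont continuous_const
  rw [IsPreconnected] at hnc
  push_neg at hnc
  obtain ⟨U', V', hU', hV', hcover, ⟨a₀, ha₀⟩, ⟨b₀, hb₀⟩, hempty⟩ := hnc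
  have hempty' : {x | u x < z} ∩ (U' ∩ V') = ∅ := hempty
  set U : Set E := {x | u x < z} ∩ U' with hU
  set V : Set E := {x | u x < z} ∩ V' with hV
  have hUopen : IsOpen U := hopen.inter hU'
  have hVopen : IsOpen V := hopen.inter hV'
  have hUV : {x | u x < z} = U ∪ V := by
    apply Subset.antisymm
    · intro x hx
      rcases hcover hx with h | h
      · exact Or.inl ⟨hx, h⟩
      · exact Or.inr ⟨hx, h⟩
    · exact union_subset inter_subset_left inter_subset_left
  have hdisjUV : U ∩ V = ∅ := by
    rw [← hempty']
    ext x
    simp only [hU, hV, mem_inter_iff, mem_setOf_eq]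
    tauto
  have hUne : U.Nonempty := ⟨a₀, ha₀.1, ha₀.2⟩
  have hVne : V.Nonempty := ⟨b₀, hb₀.1, hb₀.2⟩
  have hclU : closure U ∩ V = ∅ := by
    by_contra h
    obtain ⟨x, hx1, hx2⟩ := nonempty_iff_ne_empty.2 h
    obtain ⟨y, hy1, hy2⟩ := mem_closure_iff_nhds.1 hx1 V (hVopen.mem_nhds hx2)
    exact eq_empty_iff_forall_notMem.1 hdisjUV y (mem_inter hy2 hy1)
  have hclV : closure V ∩ U = ∅ := by
    by_contra h
    obtain ⟨x, hx1, hx2⟩ := nonempty_iff_ne_empty.2 h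
    obtain ⟨y, hy1, hy2⟩ := mem_closure_iff_nhds.1 hx1 U (hUopen.mem_nhds hx2)
    exact eq_empty_iff_forall_notMem.1 hdisjUV y (mem_inter hy1 hy2)
  set FU : Set E := closure U \ (U ∪ V) with hFU
  set FV : Set E := closure V \ (U ∪ V) with hFV
  have hFUclosed : IsClosed FU := isClosed_closure.sdiff (hUopen.union hVopen)
  have hFVclosed : IsClosed FV := isClosed_closure.sdiff (hUopen.union hVopen)
  have hfrontier_eq : frontier {x | u x < z} = FU ∪ FV := by
    rw [hopen.frontier_eq, hUV, closure_union]
    rw [hFU, hFV, union_diff_distrib]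
  have hFUfront : FU = frontier U := by
    rw [hUopen.frontier_eq]
    ext x
    simp only [hFU, mem_diff, mem_union]
    constructor
    · rintro ⟨h1, h2⟩
      exact ⟨h1, fun h => h2 (Or.inl h)⟩
    · rintro ⟨h1, h2⟩
      refine ⟨h1, ?_⟩
      rintro (h | h)
      · exact h2 h
      · exact eq_empty_iff_forall_notMem.1 hclU x (mem_inter h1 h)
  have hFVfront : FV = frontier V := by
    rw [hVopen.frontier_eq]
    ext x
    simp only [hFV, mem_diff, mem_union]
    constructor
    · rintro ⟨h1, h2⟩
      exact ⟨h1, fun h => h2 (Or.inr h)⟩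
    · rintro ⟨h1, h2⟩
      refine ⟨h1, ?_⟩
      rintro (h | h)
      · exact eq_empty_iff_forall_notMem.1 hclV x (mem_inter h1 h)
      · exact h2 h
  have hbounded : ∀ (S : Set E), S.Nonempty → S ⊆ {x | u x < z} → IsOpen S →
      frontier S ≠ ∅ := by
    intro S hSne hSsub hSopen h
    have hclopen : IsClopen S := isClopen_iff_frontier_eq_empty.2 h
    rcases isClopen_iff.1 hclopen with h' | h'
    · exact hSne.ne_empty h'
    · have h2 : univ ⊆ {x | u x ≤ z} := by
        rw [← h']
        exact hSsub.trans fun y hy => show u y ≤ z from le_of_lt hy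
      have h1 : {x | u x ≤ z} = univ := eq_univ_of_univ_subset h2
      exact noncompact_univ E (h1 ▸ hcomp)
  have hFUne : FU.Nonempty := by
    rw [hFUfront]
    rw [nonempty_iff_ne_empty]
    exact hbounded U hUne (hUV ▸ subset_union_left) hUopen
  have hFVne : FV.Nonempty := by
    rw [hFVfront]
    rw [nonempty_iff_ne_empty]
    exact hbounded V hVne (hUV ▸ subset_union_right) hVopen
  have hclsub : closure {x | u x < z} ⊆ {x | u x ≤ z} :=
    closure_minimal (fun y hy => show u y ≤ z from le_of_lt hy)
      (isClosed_le hucont continuous_const)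
  have hFUVdisj : ∀ x, x ∈ FU → x ∈ FV → False := by
    intro x hxU hxV
    have hxnotin : x ∉ {x | u x < z} := by
      rw [hUV]
      exact hxU.2
    have hxcl : x ∈ closure {x | u x < z} :=
      closure_mono (hU ▸ inter_subset_left) hxU.1
    have hxz : u x = z := le_antisymm (hclsub hxcl) (not_lt.1 hxnotin)
    obtain ⟨W, W', hW, hWW', hPconn, hclos⟩ := local_onesided hu hxz (hreg x hxz)
    obtain ⟨a, haW, haU⟩ := mem_closure_iff_nhds.1 hxU.1 W hW
    obtain ⟨b, hbW, hbV⟩ := mem_closure_iff_nhds.1 hxV.1 W hW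
    have haP : a ∈ {y ∈ W' | u y < z} := ⟨hWW' haW, haU.1⟩
    have hbP : b ∈ {y ∈ W' | u y < z} := ⟨hWW' hbW, hbV.1⟩
    have hPsub : {y ∈ W' | u y < z} ⊆ U' ∪ V' := fun y hy => hcover hy.2
    obtain ⟨c, hcP, hcUV⟩ := hPconn U' V' hU' hV' hPsub ⟨a, haP, haU.2⟩ ⟨b, hbP, hbV.2⟩
    exact eq_empty_iff_forall_notMem.1 hempty' c ⟨hcP.2, hcUV⟩
  obtain ⟨c, hc⟩ := isPreconnected_closed_iff.1 hfront FU FV hFUclosed hFVclosed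
    (hfrontier_eq ▸ subset_rfl)
    ⟨hFUne.choose, hfrontier_eq ▸ Or.inl hFUne.choose_spec, hFUne.choose_spec⟩
    ⟨hFVne.choose, hfrontier_eq ▸ Or.inr hFVne.choose_spec, hFVne.choose_spec⟩
  exact hFUVdisj c hc.2.1 hc.2.2

theorem strict_min {u : E → ℝ} (K : Finset E)
    (hK : {x | fderiv ℝ u x = 0} = (K : Set E)) {p : E} (hp : p ∈ K)
    (hmin : IsLocalMin u p) :
    ∃ ε > 0, (∀ x ∈ ball p ε, u p ≤ u x) ∧ ∀ x ∈ ball p ε, x ≠ p → u p < u x := by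
  classical
  obtain ⟨ε₁, hε₁, hball₁⟩ := Metric.eventually_nhds_iff_ball.1 hmin
  have hKfin : IsClosed ((K.erase p : Finset E) : Set E) := (K.erase p).finite_toSet.isClosed
  have hpnot : p ∈ (((K.erase p : Finset E) : Set E))ᶜ := by
    simp [Finset.notMem_erase]
  obtain ⟨ε₂, hε₂, hball₂⟩ := Metric.isOpen_iff.1 hKfin.isOpen_compl p hpnot
  refine ⟨min ε₁ ε₂, lt_min hε₁ hε₂, fun x hx => hball₁ x (ball_subset_ball (min_le_left _ _) hx),
    fun x hx hxp => ?_⟩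
  by_contra hle
  push_neg at hle
  have hxε₁ : x ∈ ball p ε₁ := ball_subset_ball (min_le_left _ _) hx
  have heq : u x = u p := le_antisymm hle (hball₁ x hxε₁)
  have hxmin : IsLocalMin u x := by
    show ∀ᶠ y in nhds x, u x ≤ u y
    rw [Metric.eventually_nhds_iff_ball]
    refine ⟨ε₁ - dist x p, by simp only [mem_ball] at hxε₁; linarith, fun y hy => ?_⟩
    have hy₁ : y ∈ ball p ε₁ := by
      rw [mem_ball] at hy hxε₁ ⊢
      calc dist y p ≤ dist y x + dist x p := dist_triangle y x p
      _ < (ε₁ - dist x p) + dist x p := by linarith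
      _ = ε₁ := by ring
    rw [heq]
    exact hball₁ y hy₁
  have hxK : x ∈ K := by
    have : x ∈ {x | fderiv ℝ u x = 0} := hxmin.fderiv_eq_zero
    rwa [hK] at this
  have hxerase : x ∈ (K.erase p : Finset E) := Finset.mem_erase.2 ⟨hxp, hxK⟩
  exact hball₂ (ball_subset_ball (min_le_right _ _) hx) hxerase

set_option maxHeartbeats 1000000 in
theorem no_two [FiniteDimensional ℝ E] [Nontrivial E] {u : E → ℝ} (hu : ContDiff ℝ 1 u)
    (hproper : Tendsto u (cocompact E) atTop)
    (K : Finset E) (hK : {x | fderiv ℝ u x = 0} = (K : Set E))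
    (hmin : ∀ p ∈ K, IsLocalMin u p)
    {z₀ : ℝ} (hbd : ∀ z ≥ z₀, IsPreconnected (frontier {x | u x < z}))
    {p q : E} (hp : p ∈ K) (hq : q ∈ K) (hne : p ≠ q) : False := by
  have hucont : Continuous u := hu.continuous
  have hcomp : ∀ c : ℝ, IsCompact {x | u x ≤ c} := sublevel_compact hucont hproper
  set S : Set ℝ :=
    {c | ∃ t : Set E, IsPreconnected t ∧ t ⊆ {x | u x ≤ c} ∧ p ∈ t ∧ q ∈ t} with hS
  have hSup : ∀ c ∈ S, ∀ d, c ≤ d → d ∈ S := by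
    rintro c ⟨t, h1, h2, h3, h4⟩ d hcd
    exact ⟨t, h1, h2.trans (fun y hy => le_trans hy hcd), h3, h4⟩
  have hKne : K.Nonempty := ⟨p, hp⟩
  set M : ℝ := max z₀ ((K.image u).max' (hKne.image u)) with hM
  have hKval : ∀ r ∈ K, u r ≤ M :=
    fun r hr => le_trans ((K.image u).le_max' (u r) (Finset.mem_image_of_mem u hr))
      (le_max_right _ _)
  set z : ℝ := M + 1 with hz
  have hreg : ∀ x, u x = z → fderiv ℝ u x ≠ 0 := by
    intro x hx h
    have hxK : x ∈ K := by rwa [← Finset.mem_coe, ← hK]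
    have := hKval x hxK
    rw [hx, hz] at this
    linarith
  have hzS : z ∈ S := by
    refine ⟨{x | u x < z}, sublevel_preconnected hu (hcomp z) hreg
      (hbd z (by rw [hz, hM]; linarith [le_max_left z₀ ((K.image u).max' (hKne.image u))])),
      fun y hy => show u y ≤ z from le_of_lt hy, ?_, ?_⟩
    · exact lt_of_le_of_lt (hKval p hp) (by rw [hz]; linarith)
    · exact lt_of_le_of_lt (hKval q hq) (by rw [hz]; linarith)
  have hSbdd : BddBelow S := ⟨u p, by rintro c ⟨t, h1, h2, h3, _⟩; exact h2 h3⟩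
  set c₀ : ℝ := sInf S with hc₀
  have hc₀p : u p ≤ c₀ := le_csInf ⟨z, hzS⟩ (by rintro c ⟨t, h1, h2, h3, _⟩; exact h2 h3)
  have hc₀q : u q ≤ c₀ := le_csInf ⟨z, hzS⟩ (by rintro c ⟨t, h1, h2, _, h4⟩; exact h2 h4)
  have hSmem : ∀ c, c₀ < c → c ∈ S := by
    intro c hc
    obtain ⟨c', hc'S, hc'lt⟩ := exists_lt_of_csInf_lt ⟨z, hzS⟩ hc
    exact hSup c' hc'S c hc'lt.le
  have hc₀S : c₀ ∈ S := by
    set F : ℕ → Set E := fun n => connectedComponentIn {x | u x ≤ c₀ + 1/(n+1)} p with hF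
    have h01 : ∀ n : ℕ, (0:ℝ) < 1/((n:ℝ)+1) := fun n => by positivity
    have hanti : Antitone F := by
      intro m n hmn
      apply connectedComponentIn_mono
      intro y hy
      have h1 : (1:ℝ)/((n:ℝ)+1) ≤ 1/((m:ℝ)+1) := by
        apply one_div_le_one_div_of_le (by positivity)
        have : (m:ℝ) ≤ (n:ℝ) := by exact_mod_cast hmn
        linarith
      have hy' : u y ≤ c₀ + 1/((n:ℝ)+1) := hy
      show u y ≤ c₀ + 1/((m:ℝ)+1)
      linarith
    have hcompF : ∀ n, IsCompact (F n) := by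
      intro n
      by_cases hx : p ∈ {x | u x ≤ c₀ + 1/((n:ℝ)+1)}
      · show IsCompact (connectedComponentIn {x : E | u x ≤ c₀ + 1/((n:ℝ)+1)} p)
        rw [connectedComponentIn_eq_image hx]
        haveI : CompactSpace {x : E | u x ≤ c₀ + 1/((n:ℝ)+1)} :=
          isCompact_iff_compactSpace.1 (hcomp _)
        exact (isClosed_connectedComponent).isCompact.image continuous_subtype_val
      · show IsCompact (connectedComponentIn {x : E | u x ≤ c₀ + 1/((n:ℝ)+1)} p)
        rw [connectedComponentIn_eq_empty hx]
        exact isCompact_empty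
    have hconnF : ∀ n, IsPreconnected (F n) := fun n => isPreconnected_connectedComponentIn
    have hpF : ∀ n, p ∈ F n := by
      intro n
      apply mem_connectedComponentIn
      show u p ≤ c₀ + 1/((n:ℝ)+1)
      linarith [h01 n]
    have hqF : ∀ n, q ∈ F n := by
      intro n
      have hcS : c₀ + 1/((n:ℝ)+1) ∈ S := hSmem _ (by linarith [h01 n])
      obtain ⟨t, h1, h2, h3, h4⟩ := hcS
      exact h1.subset_connectedComponentIn h3 h2 h4
    refine ⟨⋂ n, F n, nested_continua hanti hcompF hconnF, ?_, mem_iInter.2 hpF, mem_iInter.2 hqF⟩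
    intro x hx
    rw [mem_iInter] at hx
    show u x ≤ c₀
    by_contra hgt
    push_neg at hgt
    obtain ⟨n, hn⟩ := exists_nat_one_div_lt (show (0:ℝ) < u x - c₀ by linarith)
    have := connectedComponentIn_subset {x | u x ≤ c₀ + 1/(n+1)} p (hx n)
    simp only [mem_setOf_eq] at this
    linarith
  obtain ⟨T, hTconn, hTsub, hpT, hqT⟩ := hc₀S
  -- the key asymmetric step
  have key : ∀ a b : E, a ∈ K → u a ≤ c₀ → u b < c₀ → a ∈ T → b ∈ T →
      ((a = p ∧ b = q) ∨ (a = q ∧ b = p)) → False := by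
    intro a b haK hua hub haT hbT hab
    set A : Set E := connectedComponentIn {x | u x < c₀} b with hA
    have hopenlt : IsOpen {x | u x < c₀} := isOpen_lt hucont continuous_const
    have hAopen : IsOpen A := hopenlt.connectedComponentIn
    have hAsub : A ⊆ {x | u x < c₀} := connectedComponentIn_subset _ _
    have hbA : b ∈ A := mem_connectedComponentIn hub
    have hclsub : closure A ⊆ {x | u x ≤ c₀} :=
      closure_minimal (hAsub.trans fun y hy => show u y ≤ c₀ from le_of_lt hy)
        (isClosed_le hucont continuous_const)
    have hmemA : ∀ x ∈ closure A, u x < c₀ → x ∈ A := by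
      intro x hx hxlt
      have hccx : IsOpen (connectedComponentIn {x | u x < c₀} x) := hopenlt.connectedComponentIn
      obtain ⟨y, hy1, hy2⟩ := mem_closure_iff_nhds.1 hx _
        (hccx.mem_nhds (mem_connectedComponentIn hxlt))
      have e1 : connectedComponentIn {x | u x < c₀} x = connectedComponentIn {x | u x < c₀} y :=
        connectedComponentIn_eq hy1
      have e2 : connectedComponentIn {x | u x < c₀} b = connectedComponentIn {x | u x < c₀} y :=
        connectedComponentIn_eq hy2
      have : x ∈ connectedComponentIn {x | u x < c₀} x := mem_connectedComponentIn hxlt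
      rw [e1, ← e2] at this
      exact this
    have hopen_cl : ∀ x, x ∈ closure A → ∃ W ∈ 𝓝 x, ∀ y ∈ W, u y ≤ c₀ → y ∈ closure A := by
      intro x hx
      by_cases hxlt : u x < c₀
      · exact ⟨A, hAopen.mem_nhds (hmemA x hx hxlt), fun y hy _ => subset_closure hy⟩
      · have hxz : u x = c₀ := le_antisymm (hclsub hx) (not_lt.1 hxlt)
        have hxK : x ∉ K := by
          intro hxK
          obtain ⟨ε, hε, hball⟩ := Metric.eventually_nhds_iff_ball.1 (hmin x hxK)
          obtain ⟨y, hy1, hy2⟩ := mem_closure_iff_nhds.1 hx _ (ball_mem_nhds x hε)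
          have h1 : u x ≤ u y := hball y hy1
          have h2 : u y < c₀ := hAsub hy2
          rw [hxz] at h1
          linarith
        have hregx : fderiv ℝ u x ≠ 0 := by
          intro h
          exact hxK (by rwa [← Finset.mem_coe, ← hK])
        obtain ⟨W, W', hW, hWW', hPconn, hclos⟩ := local_onesided hu hxz hregx
        obtain ⟨y, hyW, hyA⟩ := mem_closure_iff_nhds.1 hx W hW
        have hyP : y ∈ {y ∈ W' | u y < c₀} := ⟨hWW' hyW, hAsub hyA⟩
        have hPA : {y ∈ W' | u y < c₀} ⊆ A := by
          have h1 : {y ∈ W' | u y < c₀} ⊆ connectedComponentIn {x | u x < c₀} y :=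
            hPconn.subset_connectedComponentIn hyP (fun w hw => hw.2)
          rwa [← connectedComponentIn_eq hyA] at h1
        exact ⟨W, hW, fun y' hy' hy'le => closure_mono hPA (hclos y' hy' hy'le)⟩
    by_cases hacl : a ∈ closure A
    · by_cases hualt : u a < c₀
      · -- path argument
        have haA : a ∈ A := hmemA a hacl hualt
        have hconnA : IsConnected A := by
          rw [isConnected_connectedComponentIn_iff]
          exact hub
        have hpathA : IsPathConnected A := (hAopen.isConnected_iff_isPathConnected).1 hconnA
        obtain ⟨γ, hγ⟩ := hpathA.joinedIn b hbA a haA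
        have hrange : IsCompact (range γ) := isCompact_range γ.continuous
        obtain ⟨xm, hxmmem, hxmmax⟩ := hrange.exists_isMaxOn (range_nonempty γ)
          hucont.continuousOn
        have hxmA : xm ∈ A := by
          obtain ⟨t, ht⟩ := hxmmem
          rw [← ht]
          exact hγ t
        have hm : u xm < c₀ := hAsub hxmA
        have hconnrange : IsPreconnected (range γ) := (isConnected_range γ.continuous).isPreconnected
        have hbrange : b ∈ range γ := ⟨0, γ.source⟩
        have harange : a ∈ range γ := ⟨1, γ.target⟩
        have hmS : u xm ∈ S := by
          refine ⟨range γ, hconnrange, fun y hy => hxmmax hy, ?_, ?_⟩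
          · rcases hab with ⟨ha', hb'⟩ | ⟨ha', hb'⟩
            · rw [← ha']; exact harange
            · rw [← hb']; exact hbrange
          · rcases hab with ⟨ha', hb'⟩ | ⟨ha', hb'⟩
            · rw [← hb']; exact hbrange
            · rw [← ha']; exact harange
        have := csInf_le hSbdd hmS
        rw [← hc₀] at this
        linarith
      · have hua' : u a = c₀ := le_antisymm hua (not_lt.1 hualt)
        obtain ⟨ε, hε, hball⟩ := Metric.eventually_nhds_iff_ball.1 (hmin a haK)
        obtain ⟨y, hy1, hy2⟩ := mem_closure_iff_nhds.1 hacl _ (ball_mem_nhds a hε)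
        have h1 := hball y hy1
        have h2 := hAsub hy2
        simp only [mem_setOf_eq] at h2
        rw [hua'] at h1
        linarith
    · -- disconnection argument
      choose W hWmem hWprop using hopen_cl
      set V₁ : Set E := ⋃ (x : E), ⋃ (hx : x ∈ closure A), interior (W x hx) with hV₁
      have hV₁open : IsOpen V₁ := isOpen_iUnion fun x => isOpen_iUnion fun hx => isOpen_interior
      have hAV₁ : closure A ⊆ V₁ := by
        intro x hx
        exact mem_iUnion.2 ⟨x, mem_iUnion.2 ⟨hx, mem_interior_iff_mem_nhds.2 (hWmem x hx)⟩⟩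
      have hV₁sub : ∀ y ∈ V₁, u y ≤ c₀ → y ∈ closure A := by
        intro y hy hyle
        obtain ⟨x, hx⟩ := mem_iUnion.1 hy
        obtain ⟨hxcl, hyW⟩ := mem_iUnion.1 hx
        exact hWprop x hxcl y (interior_subset hyW) hyle
      obtain ⟨c, hcT, hcV₁, hcV₂⟩ := hTconn V₁ (closure A)ᶜ hV₁open isClosed_closure.isOpen_compl
        (fun y hyT => by
          by_cases h : y ∈ closure A
          · exact Or.inl (hAV₁ h)
          · exact Or.inr h)
        ⟨b, hbT, hAV₁ (subset_closure hbA)⟩ ⟨a, haT, hacl⟩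
      exact hcV₂ (hV₁sub c hcV₁ (hTsub hcT))
  -- conclude
  rcases lt_or_eq_of_le hc₀q with hqlt | hqeq
  · exact key p q hp hc₀p hqlt hpT hqT (Or.inl ⟨rfl, rfl⟩)
  · rcases lt_or_eq_of_le hc₀p with hplt | hpeq
    · exact key q p hq hc₀q hplt hqT hpT (Or.inr ⟨rfl, rfl⟩)
    · obtain ⟨ε, hε, hwk, hstrict⟩ := strict_min K hK hp (hmin p hp)
      obtain ⟨c, hcT, hcball, hccompl⟩ := hTconn (ball p ε) ({p}ᶜ) isOpen_ball
        isOpen_compl_singleton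
        (fun y hyT => by
          by_cases h : y = p
          · exact Or.inl (by rw [h]; exact mem_ball_self hε)
          · exact Or.inr h)
        ⟨p, hpT, mem_ball_self hε⟩ ⟨q, hqT, hne.symm⟩
      have h1 := hstrict c hcball hccompl
      have h2 := hTsub hcT
      simp only [mem_setOf_eq] at h2
      rw [← hpeq] at h2
      linarith

end helpers

theorem stmt_15 (u : EuclideanSpace ℝ (Fin 2) → ℝ)
    (hu : ContDiff ℝ 1 u)
    (hproper : Filter.Tendsto u (Filter.cocompact (EuclideanSpace ℝ (Fin 2)))
      Filter.atTop)
    (K : Finset (EuclideanSpace ℝ (Fin 2)))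
    (hK : {x | fderiv ℝ u x = 0} = (K : Set (EuclideanSpace ℝ (Fin 2))))
    (hC2 : ∀ p ∈ K, ContDiffAt ℝ 2 u p)
    (hmin : ∀ p ∈ K, IsLocalMin u p)
    (hnondeg : ∀ p ∈ K,
      (Matrix.of fun i j : Fin 2 =>
        fderiv ℝ (fun y => fderiv ℝ u y (EuclideanSpace.single j 1)) p
          (EuclideanSpace.single i 1)).PosDef)
    (hbd : ∃ z₀ : ℝ, ∀ z ≥ z₀, IsPreconnected (frontier {x | u x < z})) :
    K.card = 1 := by
  obtain ⟨z₀, hbd⟩ := hbd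
  obtain ⟨x₀⟩ : Nonempty (EuclideanSpace ℝ (Fin 2)) := inferInstance
  have hcs := sublevel_compact hu.continuous hproper (u x₀)
  obtain ⟨a, haS, hamin⟩ := hcs.exists_isMinOn ⟨x₀, show u x₀ ≤ u x₀ from le_rfl⟩ hu.continuous.continuousOn
  have hglob : ∀ y, u a ≤ u y := by
    intro y
    by_cases h : u y ≤ u x₀
    · exact hamin h
    · exact le_trans (hamin (show x₀ ∈ {x | u x ≤ u x₀} from le_refl (u x₀))) (not_le.1 h).le
  have haK : a ∈ K := by
    rw [← Finset.mem_coe, ← hK]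
    exact (show IsLocalMin u a from Filter.Eventually.of_forall hglob).fderiv_eq_zero
  rw [Finset.card_eq_one]
  refine ⟨a, Finset.eq_singleton_iff_unique_mem.2 ⟨haK, fun x hx => ?_⟩⟩
  by_contra hxa
  exact no_two hu hproper K hK hmin hbd hx haK hxa
end
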